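/- Let Γ be a group generated by a finite symmetric set S, and suppose that the second group homology H₂(Γ, ℂ) with trivial complex coefficients vanishes. If there exists a real number ε > 0 such that Δ(S) + ε·b ∈ Σ²ω(Γ) for every b ∈ ω(Γ)^h with ‖b‖₁ = 1, then Γ has Kazhdan's property (T). -/

import Mathlib

noncomputable section

universe u

variable (Γ : Type u) [Group Γ]

/-- The involution of the complex group algebra `ℂ[Γ]`:
`(∑ a_g·g)* = ∑ conj(a_g)·g⁻¹`. -/
def gstar (a : MonoidAlgebra ℂ Γ) : MonoidAlgebra ℂ Γ :=
  a.coeff.sum fun g c => MonoidAlgebra.single g⁻¹ (starRingEnd ℂ c)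

/-- The `ℓ¹`-norm of an element of `ℂ[Γ]`: `‖∑ a_g·g‖₁ = ∑ |a_g|`. -/
def l1norm (a : MonoidAlgebra ℂ Γ) : ℝ :=
  a.coeff.sum fun _ c => ‖c‖

/-- The set `Σ²ℂ[Γ]` of sums of hermitian squares in the group algebra. -/
def SOS : Set (MonoidAlgebra ℂ Γ) :=
  {x | ∃ (n : ℕ) (a : Fin n → MonoidAlgebra ℂ Γ), x = ∑ i, gstar Γ (a i) * a i}

/-- The hermitian elements `ℂ[Γ]^h = {a : a* = a}`. -/
def herm : Set (MonoidAlgebra ℂ Γ) := {a | gstar Γ a = a}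

/-- The augmentation homomorphism `ε : ℂ[Γ] → ℂ`, `∑ a_g·g ↦ ∑ a_g`. -/
def aug : MonoidAlgebra ℂ Γ →ₐ[ℂ] ℂ := MonoidAlgebra.lift ℂ ℂ Γ 1

/-- The augmentation ideal `ω(Γ) = ker ε`. -/
def omega : Set (MonoidAlgebra ℂ Γ) := {a | aug Γ a = 0}

/-- The hermitian part `ω(Γ)^h` of the augmentation ideal. -/
def omegaH : Set (MonoidAlgebra ℂ Γ) := {a | a ∈ omega Γ ∧ gstar Γ a = a}

/-- `Σ²ω(Γ)`: sums of hermitian squares of elements of the augmentation ideal. -/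
def SOSomega : Set (MonoidAlgebra ℂ Γ) :=
  {x | ∃ (n : ℕ) (a : Fin n → MonoidAlgebra ℂ Γ),
    (∀ i, a i ∈ omega Γ) ∧ x = ∑ i, gstar Γ (a i) * a i}

/-- `ω²(Γ)`, the `ℂ`-span of products of two elements of the augmentation ideal. -/
def omegaSq : Set (MonoidAlgebra ℂ Γ) :=
  (Submodule.span ℂ {x : MonoidAlgebra ℂ Γ |
    ∃ a ∈ omega Γ, ∃ b ∈ omega Γ, x = a * b} : Submodule ℂ (MonoidAlgebra ℂ Γ))

/-- `c(g) = g - 1 ∈ ω(Γ)`. -/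
def cE (g : Γ) : MonoidAlgebra ℂ Γ := MonoidAlgebra.of ℂ Γ g - 1

/-- The Laplace operator `Δ(S) = |S| - ∑_{s ∈ S} s` of a finite subset `S ⊆ Γ`. -/
def Delta (S : Finset Γ) : MonoidAlgebra ℂ Γ :=
  (S.card : MonoidAlgebra ℂ Γ) - ∑ s ∈ S, MonoidAlgebra.of ℂ Γ s

section PropertyT



variable (G : Type u) [Group G]

/-- A group `Γ` has **Kazhdan's property (T)** if every 1-cocycle with respect to every
unitary representation of `Γ` on a complex Hilbert space is inner. -/
def PropertyT : Prop :=
  ∀ (H : Type u) (_ : NormedAddCommGroup H) (_ : InnerProductSpace ℂ H)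
    (_ : CompleteSpace H) (π : G →* (H ≃ₗᵢ[ℂ] H)) (δ : G → H),
    (∀ g h : G, δ (g * h) = π g (δ h) + δ g) →
    ∃ ξ : H, ∀ g : G, δ g = π g ξ - ξ

/-- `ε > 0` is a **Kazhdan constant** for `(Γ, S)`: for every unitary representation `π`
of `Γ` on a complex Hilbert space without nonzero fixed vectors one has
`⟨π(Δ(S))ξ, ξ⟩ ≥ ε·‖ξ‖²` for all `ξ`. -/
def IsKazhdanConstant (S : Finset G) (ε : ℝ) : Prop :=
  ∀ (H : Type u) (_ : NormedAddCommGroup H) (_ : InnerProductSpace ℂ H)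
    (_ : CompleteSpace H) (π : G →* (H ≃ₗᵢ[ℂ] H)),
    (∀ ξ : H, (∀ g : G, π g ξ = ξ) → ξ = 0) →
    ∀ ξ : H, ε * ‖ξ‖ ^ 2 ≤ (@inner ℂ H _ ((S.card : ℂ) • ξ - ∑ s ∈ S, π s ξ) ξ).re

end PropertyT

/-- The boundary map `∂₂ : ℂ[Γ²] → ℂ[Γ]` of the (unnormalized, inhomogeneous) bar complex
computing group homology with trivial coefficients `ℂ`: `(g,h) ↦ h - gh + g`. -/
def barD2 (x : (Γ × Γ) →₀ ℂ) : Γ →₀ ℂ :=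
  x.sum fun p c => c •
    (Finsupp.single p.2 (1 : ℂ) - Finsupp.single (p.1 * p.2) 1 + Finsupp.single p.1 1)

/-- The boundary map `∂₃ : ℂ[Γ³] → ℂ[Γ²]` of the bar complex:
`(g,h,k) ↦ (h,k) - (gh,k) + (g,hk) - (g,h)`. -/
def barD3 (x : (Γ × Γ × Γ) →₀ ℂ) : (Γ × Γ) →₀ ℂ :=
  x.sum fun t c => c •
    (Finsupp.single (t.2.1, t.2.2) (1 : ℂ) - Finsupp.single (t.1 * t.2.1, t.2.2) 1 +
      Finsupp.single (t.1, t.2.1 * t.2.2) 1 - Finsupp.single (t.1, t.2.1) 1)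

/-!
Let `δ` be a 1-cocycle for a unitary representation `π` of `Γ`. The form
`q(g, h) = ⟪δ g⁻¹, δ h⟫` on `ℂ[Γ × Γ]` is a 2-cocycle, i.e. it kills `∂₃`. Since `H₂(Γ, ℂ) = 0`
it kills every 2-cycle, so it factors through `∂₂` as a linear functional `L` on `ℂ[Γ]`, and
`∂₂ [a* | a] = -a* a` for `a ∈ ω(Γ)` gives `L (a* a) = -‖δ̃ a‖²`, where `δ̃` is the linear
extension of `δ`. Applying `L` to `Δ(S) + ε b = Σ aᵢ* aᵢ` with `b = (g + g⁻¹)/4 - 1/2` yields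
`ε ‖δ g‖² ≤ 2 Σ_{s ∈ S} ‖δ s‖²`, so `δ` is bounded.

A bounded cocycle is inner: the affine isometries `x ↦ π g x + δ g` permute the orbit `{δ h}`,
so they fix its Chebyshev centre, the minimiser of `x ↦ sup_h ‖x - δ h‖`, which exists and is
unique by the parallelogram law; then `ξ = -centre` works.
-/

open Set Filter Topology Bornology

theorem LinearMap.exists_comp_eq_of_ker_le {K V V' W : Type*} [Field K] [AddCommGroup V]
    [AddCommGroup V'] [AddCommGroup W] [Module K V] [Module K V'] [Module K W]
    (f : V →ₗ[K] V') (g : V →ₗ[K] W) (h : ker f ≤ ker g) : ∃ l : V' →ₗ[K] W, l ∘ₗ f = g := by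
  obtain ⟨l, hl⟩ :=
    LinearMap.exists_extend ((ker f).liftQ g h ∘ₗ f.quotKerEquivRange.symm.toLinearMap)
  refine ⟨l, LinearMap.ext fun x => ?_⟩
  have := congr($hl ⟨f x, mem_range_self f x⟩)
  simpa [quotKerEquivRange_symm_apply_image] using this

section FarthestDist

variable {E ι : Type*}

section Seminormed

variable [SeminormedAddCommGroup E]

def farthestDist (f : ι → E) (v : E) : ℝ := ⨆ i, ‖v - f i‖

lemma farthestDist_nonneg (f : ι → E) (v : E) : 0 ≤ farthestDist f v :=
  Real.iSup_nonneg fun _ => norm_nonneg _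

variable {f : ι → E}

lemma norm_sub_le_farthestDist (hf : IsBounded (range f)) (v : E) (i : ι) :
    ‖v - f i‖ ≤ farthestDist f v := by
  obtain ⟨C, hC⟩ := isBounded_iff_forall_norm_le.1 hf
  refine le_ciSup (f := fun i => ‖v - f i‖) ⟨‖v‖ + C, ?_⟩ i
  rintro _ ⟨j, rfl⟩
  exact (norm_sub_le _ _).trans (by gcongr; exact hC _ ⟨j, rfl⟩)

lemma lipschitzWith_farthestDist [Nonempty ι] (hf : IsBounded (range f)) :
    LipschitzWith 1 (farthestDist f) :=
  LipschitzWith.of_le_add fun v w => ciSup_le fun i =>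
    calc ‖v - f i‖ ≤ ‖w - f i‖ + dist v w := by
          rw [dist_eq_norm, add_comm]; exact norm_sub_le_norm_sub_add_norm_sub _ _ _
      _ ≤ farthestDist f w + dist v w := by gcongr; exact norm_sub_le_farthestDist hf w i

end Seminormed

variable {f : ι → E} [NormedAddCommGroup E] [InnerProductSpace ℝ E]

lemma norm_sub_sq_add_four_mul_farthestDist_midpoint_sq_le [Nonempty ι] (hf : IsBounded (range f))
    (v w : E) :
    ‖v - w‖ ^ 2 + 4 * farthestDist f (midpoint ℝ v w) ^ 2 ≤
      2 * farthestDist f v ^ 2 + 2 * farthestDist f w ^ 2 := by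
  set C := 2 * farthestDist f v ^ 2 + 2 * farthestDist f w ^ 2 - ‖v - w‖ ^ 2
  have hC : ∀ i, (2 * ‖midpoint ℝ v w - f i‖) ^ 2 ≤ C := fun i => by
    have hpar := parallelogram_law_with_norm ℝ (v - f i) (w - f i)
    have hmid : v - f i + (w - f i) = (2 : ℝ) • (midpoint ℝ v w - f i) := by
      rw [midpoint_eq_smul_add, invOf_eq_inv]; module
    rw [hmid, norm_smul, Real.norm_two, sub_sub_sub_cancel_right] at hpar
    have hv := pow_le_pow_left₀ (norm_nonneg _) (norm_sub_le_farthestDist hf v i) 2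
    have hw := pow_le_pow_left₀ (norm_nonneg _) (norm_sub_le_farthestDist hf w i) 2
    linarith
  have hr : 2 * farthestDist f (midpoint ℝ v w) ≤ √C := by
    rw [← le_div_iff₀' two_pos]
    exact ciSup_le fun i => by
      rw [le_div_iff₀' two_pos, ← abs_of_nonneg (by positivity : 0 ≤ 2 * ‖midpoint ℝ v w - f i‖)]
      exact Real.abs_le_sqrt (hC i)
  have := pow_le_pow_left₀ (by linarith [farthestDist_nonneg f (midpoint ℝ v w)]) hr 2
  rw [Real.sq_sqrt ((sq_nonneg _).trans (hC (Classical.arbitrary ι)))] at this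
  linarith

lemma eq_of_forall_farthestDist_le [Nonempty ι] (hf : IsBounded (range f)) {v w : E}
    (hv : ∀ x, farthestDist f v ≤ farthestDist f x)
    (hw : ∀ x, farthestDist f w ≤ farthestDist f x) : v = w := by
  have hpar := norm_sub_sq_add_four_mul_farthestDist_midpoint_sq_le hf v w
  have hm := pow_le_pow_left₀ (farthestDist_nonneg f v) (hv (midpoint ℝ v w)) 2
  have hvw := le_antisymm (hv w) (hw v)
  rw [← hvw] at hpar
  rw [← sub_eq_zero, ← norm_eq_zero, ← sq_eq_zero_iff]
  linarith [sq_nonneg ‖v - w‖]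

lemma exists_forall_farthestDist_le [CompleteSpace E] [Nonempty ι]
    (hf : IsBounded (range f)) : ∃ v, ∀ x, farthestDist f v ≤ farthestDist f x := by
  set r := farthestDist f
  have hbdd : BddBelow (range r) := ⟨0, by rintro _ ⟨v, rfl⟩; exact farthestDist_nonneg f v⟩
  obtain ⟨s, hanti, hlim, hmem⟩ := exists_seq_tendsto_sInf (range_nonempty r) hbdd
  set r₀ := sInf (range r)
  have hr₀ : ∀ v, r₀ ≤ r v := fun v => csInf_le hbdd ⟨v, rfl⟩
  have hr₀_nonneg : 0 ≤ r₀ := le_csInf (range_nonempty r) (by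
    rintro _ ⟨v, rfl⟩; exact farthestDist_nonneg f v)
  choose u hu using hmem
  obtain rfl : s = r ∘ u := funext fun n => (hu n).symm
  have hdist : ∀ n m N, N ≤ n → N ≤ m → dist (u n) (u m) ≤ √(4 * r (u N) ^ 2 - 4 * r₀ ^ 2) := by
    intro n m N hn hm
    have hpar := norm_sub_sq_add_four_mul_farthestDist_midpoint_sq_le hf (u n) (u m)
    have hmid := pow_le_pow_left₀ hr₀_nonneg (hr₀ (midpoint ℝ (u n) (u m))) 2
    have hn' := pow_le_pow_left₀ (farthestDist_nonneg f _) (hanti hn) 2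
    have hm' := pow_le_pow_left₀ (farthestDist_nonneg f _) (hanti hm) 2
    rw [dist_eq_norm, ← abs_norm]
    apply Real.abs_le_sqrt
    simp only [Function.comp_apply] at hn' hm'
    linarith
  have hb : Tendsto (fun N => √(4 * r (u N) ^ 2 - 4 * r₀ ^ 2)) atTop (𝓝 0) := by
    have := (((hlim.pow 2).const_mul 4).sub_const (4 * r₀ ^ 2)).sqrt
    rwa [sub_self, Real.sqrt_zero] at this
  obtain ⟨v, hv⟩ := cauchySeq_tendsto_of_complete (cauchySeq_of_le_tendsto_0 _ hdist hb)
  have hrv : r v = r₀ :=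
    tendsto_nhds_unique (((lipschitzWith_farthestDist hf).continuous.tendsto v).comp hv) hlim
  exact ⟨v, fun x => hrv ▸ hr₀ x⟩

end FarthestDist

section Cocycle

variable {𝕜 G E : Type*} [RCLike 𝕜] [Group G] [NormedAddCommGroup E] [InnerProductSpace 𝕜 E]

theorem exists_eq_sub_of_isBounded_range [CompleteSpace E] (π : G →* (E ≃ₗᵢ[𝕜] E))
    {δ : G → E} (hδ : ∀ g h, δ (g * h) = π g (δ h) + δ g) (hb : IsBounded (range δ)) :
    ∃ ξ, ∀ g, δ g = π g ξ - ξ := by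
  let _ := InnerProductSpace.rclikeToReal 𝕜 E
  obtain ⟨v, hv⟩ := exists_forall_farthestDist_le hb
  have hinv : ∀ g x, farthestDist δ (π g x + δ g) = farthestDist δ x := fun g x => by
    rw [farthestDist, ← (Equiv.mulLeft g).surjective.iSup_comp]
    refine iSup_congr fun h => ?_
    rw [Equiv.coe_mulLeft, hδ, add_sub_add_right_eq_sub, ← map_sub, LinearIsometryEquiv.norm_map]
  refine ⟨-v, fun g => ?_⟩
  have hfix := eq_of_forall_farthestDist_le hb (fun x => (hinv g v).trans_le (hv x)) hv
  rw [map_neg, neg_sub_neg, eq_sub_iff_add_eq, add_comm]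
  exact hfix

end Cocycle

open MonoidAlgebra (single of)
open ComplexConjugate

section GroupAlgebra

variable {Γ}

lemma gstar_single (g : Γ) (c : ℂ) : gstar Γ (single g c) = single g⁻¹ (conj c) := by
  rw [gstar, MonoidAlgebra.coeff_single]
  exact Finsupp.sum_single_index (by simp)

lemma gstar_zero : gstar Γ 0 = 0 := Finsupp.sum_zero_index

lemma gstar_add (a b : MonoidAlgebra ℂ Γ) : gstar Γ (a + b) = gstar Γ a + gstar Γ b := by
  classical
  rw [gstar, MonoidAlgebra.coeff_add]
  exact Finsupp.sum_add_index (by simp) fun _ _ _ _ => by rw [map_add, MonoidAlgebra.single_add]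

lemma gstar_sub (a b : MonoidAlgebra ℂ Γ) : gstar Γ (a - b) = gstar Γ a - gstar Γ b :=
  (AddMonoidHom.mk' (gstar Γ) gstar_add).map_sub a b

lemma gstar_smul (c : ℂ) (a : MonoidAlgebra ℂ Γ) : gstar Γ (c • a) = conj c • gstar Γ a := by
  induction a using MonoidAlgebra.induction_linear with
  | zero => rw [smul_zero, gstar_zero, smul_zero]
  | add a b ha hb => rw [smul_add, gstar_add, ha, hb, gstar_add, smul_add]
  | single g d => rw [MonoidAlgebra.smul_single, gstar_single, gstar_single,
      MonoidAlgebra.smul_single, smul_eq_mul, smul_eq_mul, map_mul]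

lemma gstar_gstar (a : MonoidAlgebra ℂ Γ) : gstar Γ (gstar Γ a) = a := by
  induction a using MonoidAlgebra.induction_linear with
  | zero => rw [gstar_zero, gstar_zero]
  | add a b ha hb => rw [gstar_add, gstar_add, ha, hb]
  | single g c => rw [gstar_single, gstar_single, inv_inv, Complex.conj_conj]

lemma gstar_mul (a b : MonoidAlgebra ℂ Γ) : gstar Γ (a * b) = gstar Γ b * gstar Γ a := by
  induction a using MonoidAlgebra.induction_linear with
  | zero => rw [zero_mul, gstar_zero, mul_zero]
  | add a a' ha ha' => rw [add_mul, gstar_add, ha, ha', gstar_add, mul_add]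
  | single g c =>
    induction b using MonoidAlgebra.induction_linear with
    | zero => rw [mul_zero, gstar_zero, zero_mul]
    | add b b' hb hb' => rw [mul_add, gstar_add, hb, hb', gstar_add, add_mul]
    | single h d => simp only [MonoidAlgebra.single_mul_single, gstar_single, mul_inv_rev,
        map_mul, mul_comm (conj c)]

lemma gstar_gstar_mul_self (a : MonoidAlgebra ℂ Γ) :
    gstar Γ (gstar Γ a * a) = gstar Γ a * a := by
  rw [gstar_mul, gstar_gstar]

lemma aug_single (g : Γ) (c : ℂ) : aug Γ (single g c) = c := by
  simp [aug, MonoidAlgebra.lift_single]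

lemma aug_gstar (a : MonoidAlgebra ℂ Γ) : aug Γ (gstar Γ a) = conj (aug Γ a) := by
  induction a using MonoidAlgebra.induction_linear with
  | zero => rw [gstar_zero, map_zero, map_zero]
  | add a b ha hb => rw [gstar_add, map_add, ha, hb, map_add, map_add]
  | single g c => rw [gstar_single, aug_single, aug_single]

lemma l1norm_smul (c : ℂ) (a : MonoidAlgebra ℂ Γ) : l1norm Γ (c • a) = ‖c‖ * l1norm Γ a := by
  rcases eq_or_ne c 0 with rfl | hc
  · simp [l1norm]
  rw [l1norm, l1norm, MonoidAlgebra.coeff_smul, Finsupp.sum, Finsupp.support_smul_eq hc,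
    Finsupp.sum, Finset.mul_sum]
  simp

lemma aug_cE (g : Γ) : aug Γ (cE Γ g) = 0 := by
  simp [cE, aug_single]

lemma gstar_cE_mul_cE (g : Γ) :
    gstar Γ (cE Γ g) * cE Γ g = 2 - of ℂ Γ g - of ℂ Γ g⁻¹ := by
  have hinv : gstar Γ (cE Γ g) = cE Γ g⁻¹ := by
    simp [cE, gstar_sub, MonoidAlgebra.one_def, gstar_single]
  rw [hinv, cE, cE, sub_mul, mul_sub, mul_sub, ← map_mul, inv_mul_cancel, map_one, mul_one,
    one_mul, mul_one, ← one_add_one_eq_two]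
  abel

lemma l1norm_gstar_cE_mul_cE {g : Γ} (hg : g ≠ 1) :
    l1norm Γ (gstar Γ (cE Γ g) * cE Γ g) = 4 := by
  classical
  rw [gstar_cE_mul_cE, l1norm, Finsupp.sum_of_support_subset _ (s := {1, g, g⁻¹})]
  · have hg' : g⁻¹ ≠ 1 := inv_ne_one.2 hg
    rcases eq_or_ne g⁻¹ g with hgg | hgg
    · rw [hgg, Finset.pair_eq_singleton, Finset.sum_pair hg.symm]
      simp [hg, hg.symm]
      norm_num
    · rw [Finset.sum_insert (by simp [hg.symm, hg'.symm]), Finset.sum_pair hgg.symm]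
      simp [hg, hg.symm, hg', hg'.symm, hgg, hgg.symm]
      norm_num
  · refine Finsupp.support_sub.trans (Finset.union_subset
      (Finsupp.support_sub.trans (Finset.union_subset ?_ ?_)) ?_) <;>
    exact Finsupp.support_single_subset.trans (by simp)
  · simp

lemma sum_gstar_cE_mul_cE {S : Finset Γ} (hS : ∀ s ∈ S, s⁻¹ ∈ S) :
    ∑ s ∈ S, gstar Γ (cE Γ s) * cE Γ s = (2 : ℂ) • Delta Γ S := by
  have hinv : ∑ s ∈ S, of ℂ Γ s⁻¹ = ∑ s ∈ S, of ℂ Γ s :=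
    Finset.sum_nbij' (·⁻¹) (·⁻¹) hS hS (by simp) (by simp) (by simp)
  simp only [gstar_cE_mul_cE, Finset.sum_sub_distrib, hinv, Delta, Finset.sum_const, smul_sub]
  rw [two_smul, two_smul, nsmul_eq_mul, mul_two]
  abel

end GroupAlgebra

section BarComplex

variable {Γ}

def barPairing {M : Type*} :
    MonoidAlgebra ℂ M →ₗ[ℂ] MonoidAlgebra ℂ M →ₗ[ℂ] ((M × M) →₀ ℂ) :=
  ((TensorProduct.mk ℂ (M →₀ ℂ) (M →₀ ℂ)).compr₂ (finsuppTensorFinsupp' ℂ M M).toLinearMap).compl₁₂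
    (MonoidAlgebra.coeffLinearEquiv ℂ).toLinearMap (MonoidAlgebra.coeffLinearEquiv ℂ).toLinearMap

lemma barPairing_single_single {M : Type*} (g h : M) (c d : ℂ) :
    barPairing (single g c) (single h d) = Finsupp.single (g, h) (c * d) :=
  finsuppTensorFinsupp'_single_tmul_single ℂ M M g h c d

def barD2Linear : ((Γ × Γ) →₀ ℂ) →ₗ[ℂ] (Γ →₀ ℂ) :=
  Finsupp.linearCombination ℂ fun p =>
    Finsupp.single p.2 1 - Finsupp.single (p.1 * p.2) 1 + Finsupp.single p.1 1

lemma coe_barD2Linear : ⇑(barD2Linear (Γ := Γ)) = barD2 Γ := rfl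

lemma barD2_barPairing (u v : MonoidAlgebra ℂ Γ) :
    barD2 Γ (barPairing u v) =
      MonoidAlgebra.coeffLinearEquiv ℂ (aug Γ u • v + aug Γ v • u - u * v) := by
  rw [← coe_barD2Linear]
  induction u using MonoidAlgebra.induction_linear with
  | zero => simp
  | add u u' hu hu' =>
    rw [map_add, LinearMap.add_apply, map_add, hu, hu', ← map_add]
    congr 1
    rw [map_add (aug Γ), add_mul]
    module
  | single g c =>
    induction v using MonoidAlgebra.induction_linear with
    | zero => simp
    | add v v' hv hv' =>
      rw [map_add, map_add, hv, hv', ← map_add]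
      congr 1
      rw [map_add (aug Γ), mul_add]
      module
    | single h d =>
      rw [barPairing_single_single, barD2Linear, Finsupp.linearCombination_single, aug_single,
        aug_single, MonoidAlgebra.single_mul_single]
      simp only [map_sub, map_add, map_smul]
      simp [Finsupp.smul_single, smul_sub, smul_add, mul_comm d c]
      abel

end BarComplex

section CocycleForm

variable {Γ} {H : Type*} [NormedAddCommGroup H] [InnerProductSpace ℂ H]

def linearExt {M : Type*} (δ : M → H) : MonoidAlgebra ℂ M →ₗ[ℂ] H :=
  Finsupp.linearCombination ℂ δ ∘ₗ (MonoidAlgebra.coeffLinearEquiv ℂ).toLinearMap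

lemma linearExt_single {M : Type*} (δ : M → H) (g : M) (c : ℂ) :
    linearExt δ (single g c) = c • δ g :=
  Finsupp.linearCombination_single ℂ c g

def cocycleForm (δ : Γ → H) : ((Γ × Γ) →₀ ℂ) →ₗ[ℂ] ℂ :=
  Finsupp.linearCombination ℂ fun p => inner ℂ (δ p.1⁻¹) (δ p.2)

lemma cocycleForm_single (δ : Γ → H) (g h : Γ) (c : ℂ) :
    cocycleForm δ (Finsupp.single (g, h) c) = c * inner ℂ (δ g⁻¹) (δ h) :=
  Finsupp.linearCombination_single ℂ c (g, h)

lemma cocycleForm_barPairing (δ : Γ → H) (u v : MonoidAlgebra ℂ Γ) :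
    cocycleForm δ (barPairing u v) = inner ℂ (linearExt δ (gstar Γ u)) (linearExt δ v) := by
  induction u using MonoidAlgebra.induction_linear with
  | zero => rw [map_zero, LinearMap.zero_apply, map_zero, gstar_zero, map_zero, inner_zero_left]
  | add u u' hu hu' =>
    rw [map_add, LinearMap.add_apply, map_add, hu, hu', gstar_add, map_add, inner_add_left]
  | single g c =>
    induction v using MonoidAlgebra.induction_linear with
    | zero => rw [map_zero, map_zero, map_zero, inner_zero_right]
    | add v v' hv hv' => rw [map_add, map_add, hv, hv', map_add, inner_add_right]
    | single h d =>
      rw [barPairing_single_single, cocycleForm_single, gstar_single, linearExt_single,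
        linearExt_single, inner_smul_left, inner_smul_right, Complex.conj_conj]
      ring

variable (π : Γ →* (H ≃ₗᵢ[ℂ] H)) {δ : Γ → H}

lemma cocycle_one (hδ : ∀ g h, δ (g * h) = π g (δ h) + δ g) : δ 1 = 0 := by
  simpa [map_one] using hδ 1 1

lemma inner_cocycle_inv_left (hδ : ∀ g h, δ (g * h) = π g (δ h) + δ g) (g h : Γ) :
    inner ℂ (δ g⁻¹) (δ h) = -inner ℂ (δ g) (π g (δ h)) := by
  have hinv : δ g⁻¹ = -π g⁻¹ (δ g) := by
    have := hδ g⁻¹ g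
    rw [inv_mul_cancel, cocycle_one π hδ] at this
    exact eq_neg_of_add_eq_zero_right this.symm
  rw [hinv, inner_neg_left, map_inv, LinearIsometryEquiv.inv_def, ← (π g).inner_map_map,
    LinearIsometryEquiv.apply_symm_apply]

lemma inner_cocycle_inv_twoCocycle (hδ : ∀ g h, δ (g * h) = π g (δ h) + δ g) (g h k : Γ) :
    inner ℂ (δ h⁻¹) (δ k) - inner ℂ (δ (g * h)⁻¹) (δ k) + inner ℂ (δ g⁻¹) (δ (h * k))
      - inner ℂ (δ g⁻¹) (δ h) = 0 := by
  rw [inner_cocycle_inv_left π hδ h, inner_cocycle_inv_left π hδ (g * h),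
    inner_cocycle_inv_left π hδ g, inner_cocycle_inv_left π hδ g, hδ g h, hδ h k, map_mul,
    LinearIsometryEquiv.coe_mul, Function.comp_apply, inner_add_left, map_add, inner_add_right,
    (π g).inner_map_map]
  ring

lemma cocycleForm_barD3 (hδ : ∀ g h, δ (g * h) = π g (δ h) + δ g) (y : (Γ × Γ × Γ) →₀ ℂ) :
    cocycleForm δ (barD3 Γ y) = 0 := by
  rw [barD3, map_finsuppSum]
  refine Finset.sum_eq_zero fun t _ => ?_
  dsimp only
  rw [map_smul, map_sub, map_add, map_sub, cocycleForm_single, cocycleForm_single,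
    cocycleForm_single, cocycleForm_single]
  simp only [one_mul, inner_cocycle_inv_twoCocycle π hδ, smul_zero]

end CocycleForm

section Estimate

variable {Γ} {H : Type*} [NormedAddCommGroup H] [InnerProductSpace ℂ H]
  (π : Γ →* (H ≃ₗᵢ[ℂ] H)) {δ : Γ → H}

lemma linearExt_cE (hδ : ∀ g h, δ (g * h) = π g (δ h) + δ g) (g : Γ) :
    linearExt δ (cE Γ g) = δ g := by
  rw [cE, MonoidAlgebra.of_apply, MonoidAlgebra.one_def, map_sub, linearExt_single,
    linearExt_single, cocycle_one π hδ, one_smul, smul_zero, sub_zero]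

theorem exists_linearMap_apply_gstar_mul_self (hδ : ∀ g h, δ (g * h) = π g (δ h) + δ g)
    (hH2 : ∀ x : (Γ × Γ) →₀ ℂ, barD2 Γ x = 0 → ∃ y : (Γ × Γ × Γ) →₀ ℂ, barD3 Γ y = x) :
    ∃ L : MonoidAlgebra ℂ Γ →ₗ[ℂ] ℂ,
      ∀ a ∈ omega Γ, L (gstar Γ a * a) = -(‖linearExt δ a‖ : ℂ) ^ 2 := by
  have hker : LinearMap.ker barD2Linear ≤ LinearMap.ker (cocycleForm δ) := fun x hx => by
    obtain ⟨y, rfl⟩ := hH2 x hx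
    exact cocycleForm_barD3 π hδ y
  obtain ⟨L, hL⟩ := LinearMap.exists_comp_eq_of_ker_le _ _ hker
  refine ⟨L ∘ₗ (MonoidAlgebra.coeffLinearEquiv ℂ).toLinearMap, fun a ha => ?_⟩
  have hboundary : barD2 Γ (barPairing (gstar Γ a) a) =
      -MonoidAlgebra.coeffLinearEquiv ℂ (gstar Γ a * a) := by
    rw [barD2_barPairing, aug_gstar, show aug Γ a = 0 from ha]
    simp
  have := congr($hL (barPairing (gstar Γ a) a))
  rw [LinearMap.comp_apply, coe_barD2Linear, hboundary, map_neg, cocycleForm_barPairing,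
    gstar_gstar, inner_self_eq_norm_sq_to_K] at this
  exact neg_eq_iff_eq_neg.1 this

theorem sq_norm_cocycle_le (hδ : ∀ g h, δ (g * h) = π g (δ h) + δ g)
    (hH2 : ∀ x : (Γ × Γ) →₀ ℂ, barD2 Γ x = 0 → ∃ y : (Γ × Γ × Γ) →₀ ℂ, barD3 Γ y = x)
    {S : Finset Γ} (hS : ∀ s ∈ S, s⁻¹ ∈ S) {ε : ℝ}
    (hint : ∀ b ∈ omega Γ, gstar Γ b = b → l1norm Γ b = 1 →
      Delta Γ S + (ε : ℂ) • b ∈ SOSomega Γ) (g : Γ) :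
    ε * ‖δ g‖ ^ 2 ≤ 2 * ∑ s ∈ S, ‖δ s‖ ^ 2 := by
  have hS_nonneg : 0 ≤ ∑ s ∈ S, ‖δ s‖ ^ 2 := by positivity
  rcases eq_or_ne g 1 with rfl | hg
  · simpa [cocycle_one π hδ] using hS_nonneg
  obtain ⟨L, hL⟩ := exists_linearMap_apply_gstar_mul_self π hδ hH2
  set x := gstar Γ (cE Γ g) * cE Γ g
  have hx : x ∈ omega Γ := by simp [x, omega, aug_cE]
  -- the hermitian element `(g + g⁻¹)/4 - 1/2` of `ω(Γ)` with `ℓ¹`-norm one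
  obtain ⟨n, c, hc, hsum⟩ := hint (-(4⁻¹ : ℂ) • x) (by simp [omega, show aug Γ x = 0 from hx])
    (by rw [gstar_smul, gstar_gstar_mul_self, map_neg, map_inv₀, map_ofNat])
    (by rw [l1norm_smul, l1norm_gstar_cE_mul_cE hg]; norm_num)
  have hLx : L x = -(‖δ g‖ : ℂ) ^ 2 := by rw [hL _ (aug_cE g), linearExt_cE π hδ]
  have hLΔ : 2 * L (Delta Γ S) = -∑ s ∈ S, (‖δ s‖ : ℂ) ^ 2 := by
    rw [← smul_eq_mul, ← map_smul, ← sum_gstar_cE_mul_cE hS, map_sum, ← Finset.sum_neg_distrib]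
    exact Finset.sum_congr rfl fun s _ => by rw [hL _ (aug_cE s), linearExt_cE π hδ]
  have hLsum := congr(L $hsum)
  rw [map_add, map_smul, map_smul, hLx, map_sum, Finset.sum_congr rfl fun i _ => hL _ (hc i)]
    at hLsum
  simp only [smul_eq_mul, Finset.sum_neg_distrib] at hLsum
  have hreal : ε / 4 * ‖δ g‖ ^ 2 - 1 / 2 * ∑ s ∈ S, ‖δ s‖ ^ 2 =
      -∑ i, ‖linearExt δ (c i)‖ ^ 2 := by
    apply Complex.ofReal_injective
    push_cast
    linear_combination hLsum - 1 / 2 * hLΔ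
  have hc_nonneg : 0 ≤ ∑ i, ‖linearExt δ (c i)‖ ^ 2 := by positivity
  linarith

end Estimate

theorem propertyT_of_laplacian_l1_interior (S : Finset Γ)
    (hsym : ∀ s ∈ S, s⁻¹ ∈ S)
    (hH2 : ∀ x : (Γ × Γ) →₀ ℂ, barD2 Γ x = 0 → ∃ y : (Γ × Γ × Γ) →₀ ℂ, barD3 Γ y = x)
    (ε : ℝ) (hε : 0 < ε)
    (hint : ∀ b ∈ omega Γ, gstar Γ b = b → l1norm Γ b = 1 →
      Delta Γ S + (ε : ℂ) • b ∈ SOSomega Γ) :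
    PropertyT Γ := by
  intro H _ _ _ π δ hδ
  refine exists_eq_sub_of_isBounded_range π hδ (isBounded_iff_forall_norm_le.2
    ⟨√(2 / ε * ∑ s ∈ S, ‖δ s‖ ^ 2), ?_⟩)
  rintro _ ⟨g, rfl⟩
  apply Real.le_sqrt_of_sq_le
  rw [div_mul_eq_mul_div, le_div_iff₀ hε, mul_comm]
  exact sq_norm_cocycle_le π hδ hH2 hsym hint g
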